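/- Let v : ℝ³ → ℝ³ be a C¹ vector field and ν : ℝ³ → ℝ a function such that rot v(x) = ν(x) v(x) for all x ∈ ℝ³. Then every solution x : I → ℝ³ of ẋ = v(x) satisfies ẍ(t) = ∇(½‖v‖²)(x(t)) for all t ∈ I; i.e. the trajectories are motions of a unit-mass material point in the potential field with force function U = ½‖v‖². -/

import Mathlib

/-!
Along a trajectory the chain rule gives `ẍ = (Dv) v`, and Lamb's identity
`∇(½‖v‖²) = (Dv) v + v × rot v` turns this into `∇(½‖v‖²)`, since `v × rot v = ν (v × v) = 0`.
-/

open Real Set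

noncomputable section

/-- Partial derivative in the `k`-th coordinate direction. -/
def pd (k : Fin 3) (f : (Fin 3 → ℝ) → ℝ) (x : Fin 3 → ℝ) : ℝ :=
  fderiv ℝ f x (Pi.single k 1)

/-- Gradient. -/
def grad (f : (Fin 3 → ℝ) → ℝ) (x : Fin 3 → ℝ) : Fin 3 → ℝ := fun k => pd k f x

/-- Euclidean inner product on ℝ³. -/
def dot (a b : Fin 3 → ℝ) : ℝ := ∑ i, a i * b i

/-- Squared Euclidean norm on ℝ³. -/
def nsq (a : Fin 3 → ℝ) : ℝ := ∑ i, a i ^ 2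

/-- Cross product on ℝ³. -/
def cross (a b : Fin 3 → ℝ) : Fin 3 → ℝ :=
  ![a 1 * b 2 - a 2 * b 1, a 2 * b 0 - a 0 * b 2, a 0 * b 1 - a 1 * b 0]

/-- Curl of a vector field on ℝ³. -/
def rot (u : (Fin 3 → ℝ) → (Fin 3 → ℝ)) (x : Fin 3 → ℝ) : Fin 3 → ℝ :=
  ![pd 1 (fun y => u y 2) x - pd 2 (fun y => u y 1) x,
    pd 2 (fun y => u y 0) x - pd 0 (fun y => u y 2) x,
    pd 0 (fun y => u y 1) x - pd 1 (fun y => u y 0) x]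

open scoped Matrix

section VectorCalculus

variable {v : (Fin 3 → ℝ) → (Fin 3 → ℝ)} {y : Fin 3 → ℝ}

lemma cross_eq_crossProduct (a b : Fin 3 → ℝ) : cross a b = a ⨯₃ b :=
  (cross_apply a b).symm

lemma pd_apply_eq_fderiv (hv : DifferentiableAt ℝ v y) (i k : Fin 3) :
    pd k (fun z => v z i) y = fderiv ℝ v y (Pi.single k 1) i := by
  rw [pd, fderiv_apply hv]
  rfl

lemma rot_eq_fderiv (hv : DifferentiableAt ℝ v y) :
    rot v y = ![fderiv ℝ v y (Pi.single 1 1) 2 - fderiv ℝ v y (Pi.single 2 1) 1,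
      fderiv ℝ v y (Pi.single 2 1) 0 - fderiv ℝ v y (Pi.single 0 1) 2,
      fderiv ℝ v y (Pi.single 0 1) 1 - fderiv ℝ v y (Pi.single 1 1) 0] := by
  simp only [rot, pd_apply_eq_fderiv hv]

lemma hasFDerivAt_nsq (a : Fin 3 → ℝ) :
    HasFDerivAt nsq (∑ i, (2 * a i) • (ContinuousLinearMap.proj i : (Fin 3 → ℝ) →L[ℝ] ℝ)) a := by
  unfold nsq
  refine HasFDerivAt.fun_sum fun i _ => ?_
  simpa using (ContinuousLinearMap.proj i : (Fin 3 → ℝ) →L[ℝ] ℝ).hasFDerivAt.pow 2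

lemma grad_half_nsq_comp_eq_dot (hv : DifferentiableAt ℝ v y) (k : Fin 3) :
    grad (fun z => 1 / 2 * nsq (v z)) y k = dot (v y) (fderiv ℝ v y (Pi.single k 1)) := by
  have h : HasFDerivAt (fun z => 1 / 2 * nsq (v z)) _ y :=
    ((hasFDerivAt_nsq (v y)).comp y hv.hasFDerivAt).const_mul (1 / 2 : ℝ)
  rw [grad, pd, h.fderiv]
  simp only [one_div, smul_apply, ContinuousLinearMap.comp_apply, sum_apply,
    ContinuousLinearMap.proj_apply, smul_eq_mul, Finset.mul_sum, dot]
  ring_nf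

lemma ContinuousLinearMap.apply_apply_eq_sum_single {ι κ : Type*} [Fintype ι] [DecidableEq ι]
    (L : (ι → ℝ) →L[ℝ] (κ → ℝ)) (a : ι → ℝ) (k : κ) :
    L a k = ∑ i, a i * L (Pi.single i 1) k := by
  conv_lhs => rw [pi_eq_sum_univ' a]
  simp only [map_sum, map_smul, Finset.sum_apply, Pi.smul_apply, smul_eq_mul]

lemma grad_half_nsq_eq_fderiv_add_cross_rot (hv : DifferentiableAt ℝ v y) :
    grad (fun z => 1 / 2 * nsq (v z)) y = fderiv ℝ v y (v y) + cross (v y) (rot v y) := by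
  funext k
  rw [grad_half_nsq_comp_eq_dot hv, Pi.add_apply, ContinuousLinearMap.apply_apply_eq_sum_single,
    rot_eq_fderiv hv]
  fin_cases k <;>
    simp only [dot, cross, Fin.sum_univ_three, Fin.isValue, Fin.zero_eta, Fin.mk_one,
      Fin.reduceFinMk, Matrix.cons_val, Matrix.cons_val_zero, Matrix.cons_val_one] <;>
    ring

end VectorCalculus

/-- Bernoulli's optical–mechanical analogy: if `rot v = ν v`, then solutions of
`ẋ = v(x)` satisfy `ẍ = ∇(½‖v‖²)(x)`. -/
theorem bernoulli_optical_mechanical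
    (v : (Fin 3 → ℝ) → (Fin 3 → ℝ)) (ν : (Fin 3 → ℝ) → ℝ)
    (hv : ContDiff ℝ 1 v)
    (hrot : ∀ x, rot v x = fun k => ν x * v x k)
    (t₁ t₂ : ℝ) (x : ℝ → (Fin 3 → ℝ))
    (hx : ∀ t ∈ Ioo t₁ t₂, HasDerivAt x (v (x t)) t) :
    ∀ t ∈ Ioo t₁ t₂,
      HasDerivAt (fun s => v (x s))
        (grad (fun y => (1 / 2) * nsq (v y)) (x t)) t := by
  intro t ht
  have hvx : DifferentiableAt ℝ v (x t) := hv.differentiable one_ne_zero (x t)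
  have hcross : cross (v (x t)) (rot v (x t)) = 0 := by
    rw [hrot, cross_eq_crossProduct]
    change v (x t) ⨯₃ (ν (x t) • v (x t)) = 0
    rw [map_smul, cross_self, smul_zero]
  rw [grad_half_nsq_eq_fderiv_add_cross_rot hvx, hcross, add_zero]
  exact hvx.hasFDerivAt.comp_hasDerivAt t (hx t ht)
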